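/- If a permutation π of [n] has no alignments, then π is the rotation i ↦ i + r (mod n) for some fixed r; consequently its Grassmann necklace is the necklace of cyclic intervals N_i = [i, i+r). -/

import Mathlib

open Finset

variable {n : ℕ}

/-- Position of `x` in the cyclic order on `Fin n` starting at `i`. -/
def cpos (i x : Fin n) : ℕ := ((x - i : Fin n) : ℕ)

/-- `X ≪_i Y`: every element of `X \\ Y` precedes every element of `Y \\ X`
in the cyclic order starting at `i`. -/
def Ll (i : Fin n) (X Y : Finset (Fin n)) : Prop :=
  ∀ x ∈ X \ Y, ∀ y ∈ Y \ X, cpos i x < cpos i y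

/-- `X` and `Y` are weakly separated. -/
def WSep (X Y : Finset (Fin n)) : Prop := ∃ i : Fin n, Ll i X Y

/-- The Grassmann necklace associated with a permutation `π`:
`N_i = { k : k ≤_i π⁻¹(k) }`. -/
def necklaceOf (π : Equiv.Perm (Fin n)) (i : Fin n) : Finset (Fin n) :=
  Finset.univ.filter fun k => cpos i k ≤ cpos i (π.symm k)

/-- `(i, j)` is an alignment of `π`: the quadruple `π⁻¹(i), i, j, π⁻¹(j)`
occurs in this cyclic order (`j = π(j)` allowed, `i = π(i)` not). -/
def IsAlignment (π : Equiv.Perm (Fin n)) (i j : Fin n) : Prop :=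
  0 < cpos (π.symm i) i ∧
  cpos (π.symm i) i < cpos (π.symm i) j ∧
  cpos (π.symm i) j ≤ cpos (π.symm i) (π.symm j)

/-!
Measure each `x` by the length of the clockwise arc from `π⁻¹ x` to `x`, a fixed point
counting as a full turn `n`. Since `π` permutes the points, for any base point `a` these lengths
add up to `n` times the number of arcs that pass over `a`. Let the arc ending at `i` be a longest
one, of length `M`, and let `a = π⁻¹ i`. Absence of alignments forces the arc ending at each of
the `M` points of `[a, i)` to pass over `a`, so the total is at least `n * M`; as no arc is longer
than `M`, all arcs have length `M`, i.e. `π` is the rotation by `M`.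
-/

lemma cpos_lt (u v : Fin n) : cpos u v < n := (v - u).isLt

lemma cpos_add_val_eq_or (u v : Fin n) : cpos u v + u = v ∨ cpos u v + u = v + n := by
  unfold cpos
  rcases le_or_gt u v with huv | huv
  · rw [Fin.coe_sub_iff_le.mpr huv]
    have : (u : ℕ) ≤ v := huv
    omega
  · rw [Fin.coe_sub_iff_lt.mpr huv]
    have : (v : ℕ) < u := huv
    omega

/-- The `n` records whether the clockwise walk from `y` to `x`, of length `n - cpos x y`,
passes `a`. -/
lemma sub_cpos_add_cpos (a x y : Fin n) :
    n - cpos x y + cpos a y = cpos a x + if cpos a x ≤ cpos a y then n else 0 := by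
  have := cpos_lt x y; have := cpos_lt a x; have := cpos_lt a y
  have := cpos_add_val_eq_or x y; have := cpos_add_val_eq_or a x; have := cpos_add_val_eq_or a y
  split_ifs <;> omega

lemma card_filter_cpos_lt [NeZero n] (a : Fin n) {m : ℕ} (hm : m ≤ n) :
    #{x | cpos a x < m} = m :=
  calc #{x | cpos a x < m} = #{y : Fin n | (y : ℕ) < m} :=
        card_equiv (Equiv.subRight a) fun x => by simp only [mem_filter, mem_univ, true_and]; rfl
    _ = m := by rw [Fin.card_filter_val_lt, min_eq_right hm]

/-- The length of the clockwise arc from `π⁻¹ x` to `x`, taken in `(0, n]`: a fixed point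
makes a full turn. -/
def arcLength (π : Equiv.Perm (Fin n)) (x : Fin n) : ℕ := n - cpos x (π.symm x)

lemma arcLength_pos (π : Equiv.Perm (Fin n)) (x : Fin n) : 0 < arcLength π x :=
  Nat.sub_pos_of_lt (cpos_lt x _)

lemma arcLength_le (π : Equiv.Perm (Fin n)) (x : Fin n) : arcLength π x ≤ n := Nat.sub_le _ _

lemma sum_arcLength (π : Equiv.Perm (Fin n)) (a : Fin n) :
    ∑ x, arcLength π x = n * #{x | cpos a x ≤ cpos a (π.symm x)} := by
  have key := sum_congr rfl fun x (_ : x ∈ univ) => sub_cpos_add_cpos a x (π.symm x)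
  rw [sum_add_distrib, sum_add_distrib, Equiv.sum_comp π.symm (cpos a ·), ← sum_filter,
    sum_const, smul_eq_mul] at key
  simp only [arcLength]
  linarith

/-- If `π⁻¹ x` lay strictly between `π⁻¹ i` and `x`, then `(x, i)` would be an alignment. -/
lemma le_cpos_symm_of_cpos_lt_arcLength {π : Equiv.Perm (Fin n)}
    (h : ∀ i j : Fin n, ¬ IsAlignment π i j) {i x : Fin n}
    (hx : cpos (π.symm i) x < arcLength π i) :
    cpos (π.symm i) x ≤ cpos (π.symm i) (π.symm x) := by
  by_contra! hlt
  have hinj : (x : ℕ) = i ↔ (π.symm x : ℕ) = π.symm i := by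
    rw [Fin.val_inj, Fin.val_inj, π.symm.injective.eq_iff]
  unfold arcLength at hx
  generalize ha : π.symm i = a at *
  generalize hb : π.symm x = b at *
  have := cpos_lt a x; have := cpos_lt i a; have := cpos_lt a b
  have := cpos_lt b x; have := cpos_lt b i; have := cpos_lt b a
  have := cpos_add_val_eq_or a x; have := cpos_add_val_eq_or i a; have := cpos_add_val_eq_or a b
  have := cpos_add_val_eq_or b x; have := cpos_add_val_eq_or b i; have := cpos_add_val_eq_or b a
  refine h x i ?_
  rw [IsAlignment, ha, hb]
  omega

lemma exists_forall_arcLength_eq [NeZero n] {π : Equiv.Perm (Fin n)}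
    (h : ∀ i j : Fin n, ¬ IsAlignment π i j) : ∃ r, ∀ x, arcLength π x = r := by
  obtain ⟨i, -, hi⟩ := univ.exists_max_image (arcLength π) univ_nonempty
  refine ⟨arcLength π i, ?_⟩
  have hsum : ∑ x, arcLength π x = ∑ _x : Fin n, arcLength π i := by
    refine le_antisymm (sum_le_sum fun x _ => hi x (mem_univ x)) ?_
    calc ∑ _x : Fin n, arcLength π i
        = n * #{x | cpos (π.symm i) x < arcLength π i} := by
          rw [card_filter_cpos_lt _ (arcLength_le π i), sum_const, card_univ, Fintype.card_fin,
            smul_eq_mul]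
      _ ≤ n * #{x | cpos (π.symm i) x ≤ cpos (π.symm i) (π.symm x)} :=
          Nat.mul_le_mul_left n (card_le_card fun x hx => by
            simp only [mem_filter, mem_univ, true_and] at hx ⊢
            exact le_cpos_symm_of_cpos_lt_arcLength h hx)
      _ = ∑ x, arcLength π x := (sum_arcLength π _).symm
  exact fun x => (sum_eq_sum_iff_of_le fun x _ => hi x (mem_univ x)).mp hsum x (mem_univ x)

open Fin.NatCast Fin.CommRing in
lemma apply_eq_add_of_forall_arcLength_eq [NeZero n] {π : Equiv.Perm (Fin n)} {r : ℕ}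
    (hr : ∀ x, arcLength π x = r) (x : Fin n) : π x = x + r := by
  have hrn : r ≤ n := hr x ▸ arcLength_le π x
  have hcpos : cpos (π x) x = n - r := by
    have hlen := hr (π x)
    simp only [arcLength, Equiv.symm_apply_apply] at hlen
    have := cpos_lt (π x) x
    omega
  have hsub : x - π x = (n : Fin n) - r := by
    rw [← Nat.cast_sub hrn, ← hcpos, cpos, Fin.cast_val_eq_self]
  rw [Fin.natCast_self] at hsub
  linear_combination -hsub

lemma necklaceOf_eq_of_forall_arcLength_eq {π : Equiv.Perm (Fin n)} {r : ℕ}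
    (hr : ∀ x, arcLength π x = r) (i : Fin n) :
    necklaceOf π i = univ.filter fun x => cpos i x < r := by
  ext x
  have hwrap : arcLength π x + cpos i (π.symm x) = _ := sub_cpos_add_cpos i x (π.symm x)
  rw [hr x] at hwrap
  have := cpos_lt i (π.symm x)
  simp only [necklaceOf, mem_filter, mem_univ, true_and]
  split_ifs at hwrap <;> omega

open Fin.NatCast in
/-- A permutation with no alignments is the rotation `i ↦ i + r`, and its
necklace is the necklace of cyclic intervals `N_i = [i, i + r)`. -/
theorem no_alignment_rotation [NeZero n] (π : Equiv.Perm (Fin n))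
    (h : ∀ i j : Fin n, ¬ IsAlignment π i j) :
    ∃ r : ℕ, 0 < r ∧ r ≤ n ∧ (∀ i : Fin n, π i = i + (r : Fin n)) ∧
      ∀ i : Fin n, necklaceOf π i = Finset.univ.filter fun x => cpos i x < r := by
  obtain ⟨r, hr⟩ := exists_forall_arcLength_eq h
  exact ⟨r, hr 0 ▸ arcLength_pos π 0, hr 0 ▸ arcLength_le π 0,
    apply_eq_add_of_forall_arcLength_eq hr, necklaceOf_eq_of_forall_arcLength_eq hr⟩
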